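/- Gibbs variational principle: for every density matrix ρ and every λ ∈ ℝ^k, S(ρ) ≤ φ(λ) + Σ_{i=1}^k λ_i tr(ρ X_i), with equality if and only if ρ = σ_λ, where σ_λ = exp(−Σ λ_i X_i)/tr(exp(−Σ λ_i X_i)). -/

import Mathlib

open scoped BigOperators ComplexOrder Matrix
noncomputable section
namespace MaxEnt

/-- A density matrix: positive semidefinite with trace one. -/
def IsDensityMatrix {d : ℕ} (ρ : Matrix (Fin d) (Fin d) ℂ) : Prop :=
  ρ.PosSemidef ∧ ρ.trace = 1

/-- The set `M_X` of attainable moment vectors. -/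
def momentSet {d k : ℕ} (X : Fin k → Matrix (Fin d) (Fin d) ℂ) : Set (Fin k → ℝ) :=
  {y | ∃ ρ, IsDensityMatrix ρ ∧ ∀ i, (ρ * X i).trace = (y i : ℂ)}

/-- The constraint set `C(m)`. -/
def constraintSet {d k : ℕ} (X : Fin k → Matrix (Fin d) (Fin d) ℂ) (m : Fin k → ℝ) :
    Set (Matrix (Fin d) (Fin d) ℂ) :=
  {ρ | IsDensityMatrix ρ ∧ ∀ i, (ρ * X i).trace = (m i : ℂ)}

/-- Largest eigenvalue of a Hermitian matrix (junk value `0` otherwise). -/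
def lambdaMax {d : ℕ} (H : Matrix (Fin d) (Fin d) ℂ) : ℝ :=
  if h : H.IsHermitian then ⨆ i, h.eigenvalues i else 0

/-- Von Neumann entropy `S(ρ) = -tr(ρ log ρ)` computed via eigenvalues,
with the convention `0 log 0 = 0` (junk value `0` for non-Hermitian input). -/
def entropy {d : ℕ} (ρ : Matrix (Fin d) (Fin d) ℂ) : ℝ :=
  if h : ρ.IsHermitian then -∑ i, h.eigenvalues i * Real.log (h.eigenvalues i) else 0

/-- Matrix logarithm of a Hermitian matrix via functional calculus on eigenvalues. -/
def matLog {d : ℕ} (A : Matrix (Fin d) (Fin d) ℂ) : Matrix (Fin d) (Fin d) ℂ :=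
  if h : A.IsHermitian then
    (h.eigenvectorUnitary : Matrix (Fin d) (Fin d) ℂ) *
      Matrix.diagonal (fun i => (Real.log (h.eigenvalues i) : ℂ)) *
      (star (h.eigenvectorUnitary : Matrix (Fin d) (Fin d) ℂ))
  else 0

/-- Quantum relative entropy `D(ρ‖σ) = tr(ρ log ρ) - tr(ρ log σ)`, where
`tr(ρ log ρ) = -S(ρ)` uses the `0 log 0 = 0` convention. -/
def relEntropy {d : ℕ} (ρ σ : Matrix (Fin d) (Fin d) ℂ) : ℝ :=
  -entropy ρ - ((ρ * matLog σ).trace).re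

/-- Trace norm `‖A‖₁ = tr √(AᴴA)`. -/
def traceNorm {n : Type*} [Fintype n] [DecidableEq n] (A : Matrix n n ℂ) : ℝ :=
  (((Matrix.posSemidef_conjTranspose_mul_self A).1.eigenvectorUnitary : Matrix n n ℂ) *
      Matrix.diagonal (fun i => ((Real.sqrt ((Matrix.posSemidef_conjTranspose_mul_self A).1.eigenvalues i) : ℝ) : ℂ)) *
      (star ((Matrix.posSemidef_conjTranspose_mul_self A).1.eigenvectorUnitary : Matrix n n ℂ))).trace.re

/-- Operator norm (ℓ²→ℓ²) of a matrix. -/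
def opNorm {d : ℕ} (A : Matrix (Fin d) (Fin d) ℂ) : ℝ :=
  ‖Matrix.toEuclideanCLM (𝕜 := ℂ) A‖

/-- The Gibbs state `σ_λ = exp(-Σ λᵢ Xᵢ) / tr(exp(-Σ λᵢ Xᵢ))`. -/
def gibbs {d k : ℕ} (X : Fin k → Matrix (Fin d) (Fin d) ℂ) (lam : Fin k → ℝ) :
    Matrix (Fin d) (Fin d) ℂ :=
  ((NormedSpace.exp (-(∑ i, (lam i : ℂ) • X i))).trace)⁻¹ •
    NormedSpace.exp (-(∑ i, (lam i : ℂ) • X i))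

/-- The log-partition function `φ(λ) = log tr(exp(-Σ λᵢ Xᵢ))`. -/
def logPartition {d k : ℕ} (X : Fin k → Matrix (Fin d) (Fin d) ℂ) (lam : Fin k → ℝ) : ℝ :=
  Real.log (((NormedSpace.exp (-(∑ i, (lam i : ℂ) • X i))).trace).re)


private lemma klein_term {p q : ℝ} (hp : 0 ≤ p) (hq : 0 < q) :
    0 ≤ p * Real.log p - p * Real.log q - (p - q) ∧
      (p * Real.log p - p * Real.log q - (p - q) = 0 ↔ p = q) := by
  rcases eq_or_lt_of_le hp with h | hp'
  · rw [← h]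
    simp only [zero_mul, zero_sub, sub_zero, sub_neg_eq_add, zero_add]
    constructor
    · exact hq.le
    · constructor
      · intro h1; linarith
      · intro h1; linarith
  · have hx : (0:ℝ) < q / p := div_pos hq hp'
    have hld : Real.log (q / p) = Real.log q - Real.log p := Real.log_div hq.ne' hp'.ne'
    have h2 : p * Real.log (q / p) = p * Real.log q - p * Real.log p := by rw [hld]; ring
    have hqp : p * (q / p - 1) = q - p := by field_simp
    constructor
    · have hlog : Real.log (q / p) ≤ q / p - 1 := Real.log_le_sub_one_of_pos hx
      have := mul_le_mul_of_nonneg_left hlog hp'.le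
      linarith
    · constructor
      · intro he
        by_contra hne
        have hx1 : q / p ≠ 1 := by
          intro h1
          rw [div_eq_one_iff_eq hp'.ne'] at h1
          exact hne h1.symm
        have hstrict := Real.log_lt_sub_one_of_pos hx hx1
        have := mul_lt_mul_of_pos_left hstrict hp'
        linarith
      · intro he; rw [he]; ring

private lemma sum_klein {d : ℕ} (a : Fin d → Fin d → ℝ) (p q : Fin d → ℝ)
    (ha : ∀ j i, 0 ≤ a j i) (hp : ∀ i, 0 ≤ p i) (hq : ∀ j, 0 < q j)
    (hap : ∑ j, ∑ i, a j i * p i = 1) (haq : ∑ j, ∑ i, a j i * q j = 1) :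
    0 ≤ ∑ j, ∑ i, a j i * (p i * Real.log (p i) - p i * Real.log (q j)) ∧
      (∑ j, ∑ i, a j i * (p i * Real.log (p i) - p i * Real.log (q j)) = 0 ↔
        ∀ j i, a j i = 0 ∨ p i = q j) := by
  have key : ∀ j i, 0 ≤ a j i * (p i * Real.log (p i) - p i * Real.log (q j) - (p i - q j)) :=
    fun j i => mul_nonneg (ha j i) (klein_term (hp i) (hq j)).1
  have hsplit : ∑ j, ∑ i, a j i * (p i * Real.log (p i) - p i * Real.log (q j))
      = ∑ j, ∑ i, a j i * (p i * Real.log (p i) - p i * Real.log (q j) - (p i - q j)) := by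
    have e1 : ∀ j i, a j i * (p i * Real.log (p i) - p i * Real.log (q j))
        = a j i * (p i * Real.log (p i) - p i * Real.log (q j) - (p i - q j))
          + (a j i * p i - a j i * q j) := by
      intro j i; ring
    simp_rw [e1, Finset.sum_add_distrib, Finset.sum_sub_distrib, hap, haq]
    ring
  have hnn : 0 ≤ ∑ j, ∑ i, a j i * (p i * Real.log (p i) - p i * Real.log (q j)) := by
    rw [hsplit]
    exact Finset.sum_nonneg fun j _ => Finset.sum_nonneg fun i _ => key j i
  refine ⟨hnn, ?_, ?_⟩
  · intro h0 j i
    rw [hsplit, Finset.sum_eq_zero_iff_of_nonneg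
      (fun j _ => Finset.sum_nonneg fun i _ => key j i)] at h0
    have hj := h0 j (Finset.mem_univ j)
    rw [Finset.sum_eq_zero_iff_of_nonneg (fun i _ => key j i)] at hj
    have hji := hj i (Finset.mem_univ i)
    rcases mul_eq_zero.mp hji with h1 | h1
    · exact Or.inl h1
    · exact Or.inr ((klein_term (hp i) (hq j)).2.mp h1)
  · intro hC
    rw [hsplit]
    refine Finset.sum_eq_zero fun j _ => Finset.sum_eq_zero fun i _ => ?_
    rcases hC j i with h1 | h1
    · rw [h1, zero_mul]
    · rw [(klein_term (hp i) (hq j)).2.mpr h1, mul_zero]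

/-- Gibbs variational principle: `S(ρ) ≤ φ(λ) + Σ λᵢ tr(ρXᵢ)`, with
equality iff `ρ = σ_λ`. -/
theorem gibbs_variational_principle
    (d k : ℕ) (hd : 0 < d) (X : Fin k → Matrix (Fin d) (Fin d) ℂ)
    (hX : ∀ i, (X i).IsHermitian)
    (ρ : Matrix (Fin d) (Fin d) ℂ) (hρ : IsDensityMatrix ρ) (lam : Fin k → ℝ) :
    entropy ρ ≤ logPartition X lam + ∑ i, lam i * ((ρ * X i).trace).re ∧
      (entropy ρ = logPartition X lam + ∑ i, lam i * ((ρ * X i).trace).re ↔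
        ρ = gibbs X lam) := by
  classical
  obtain ⟨hpsd, htr⟩ := hρ
  have hρH : ρ.IsHermitian := hpsd.1
  set H : Matrix (Fin d) (Fin d) ℂ := ∑ i, (lam i : ℂ) • X i with hHdef
  have hH : H.IsHermitian := by
    rw [hHdef, Matrix.IsHermitian, Matrix.conjTranspose_sum]
    refine Finset.sum_congr rfl fun i _ => ?_
    rw [Matrix.conjTranspose_smul, (hX i).eq]
    simp [Complex.star_def, Complex.conj_ofReal]
  have hnH : (-H).IsHermitian := hH.neg
  set ν : Fin d → ℝ := hnH.eigenvalues with hν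
  set V : Matrix (Fin d) (Fin d) ℂ := (hnH.eigenvectorUnitary : Matrix (Fin d) (Fin d) ℂ) with hVdef
  set p : Fin d → ℝ := hρH.eigenvalues with hpdef
  set U : Matrix (Fin d) (Fin d) ℂ := (hρH.eigenvectorUnitary : Matrix (Fin d) (Fin d) ℂ) with hUdef
  set Dν : Matrix (Fin d) (Fin d) ℂ := Matrix.diagonal (fun j => (ν j : ℂ)) with hDν
  set Dp : Matrix (Fin d) (Fin d) ℂ := Matrix.diagonal (fun i => (p i : ℂ)) with hDp
  have hVV : V * star V = 1 := Matrix.mem_unitaryGroup_iff.mp hnH.eigenvectorUnitary.2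
  have hVV' : star V * V = 1 := Matrix.mem_unitaryGroup_iff'.mp hnH.eigenvectorUnitary.2
  have hUU : U * star U = 1 := Matrix.mem_unitaryGroup_iff.mp hρH.eigenvectorUnitary.2
  have hUU' : star U * U = 1 := Matrix.mem_unitaryGroup_iff'.mp hρH.eigenvectorUnitary.2
  have hNspec : -H = V * Dν * star V := hnH.spectral_theorem
  have hρspec : ρ = U * Dp * star U := hρH.spectral_theorem
  -- exponential
  have hVunit : IsUnit V := ⟨⟨V, star V, hVV, hVV'⟩, rfl⟩
  have hVinv : V⁻¹ = star V := Matrix.inv_eq_right_inv hVV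
  have hexp : NormedSpace.exp (-H)
      = V * Matrix.diagonal (fun j => (Real.exp (ν j) : ℂ)) * star V := by
    rw [hNspec, ← hVinv, Matrix.exp_conj V Dν hVunit, hVinv, hDν, Matrix.exp_diagonal]
    have hfe : NormedSpace.exp (fun j => ((ν j : ℝ) : ℂ)) = fun j => ((Real.exp (ν j) : ℝ) : ℂ) := by
      rw [Pi.exp_def]
      funext j
      rw [← Complex.exp_eq_exp_ℂ, ← Complex.ofReal_exp]
    rw [hfe]
  set Z : ℝ := ∑ j, Real.exp (ν j) with hZdef
  have hdne : Nonempty (Fin d) := Fin.pos_iff_nonempty.mp hd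
  have hZ : 0 < Z := Finset.sum_pos (fun j _ => Real.exp_pos _) Finset.univ_nonempty
  have htraceE : (NormedSpace.exp (-H)).trace = (Z : ℂ) := by
    rw [hexp, Matrix.trace_mul_cycle, hVV', one_mul, Matrix.trace_diagonal, hZdef]
    push_cast
    rfl
  have hφ : logPartition X lam = Real.log Z := by
    rw [logPartition, ← hHdef, htraceE, Complex.ofReal_re]
  set q : Fin d → ℝ := fun j => Real.exp (ν j) / Z with hqdef
  have hq0 : ∀ j, 0 < q j := fun j => div_pos (Real.exp_pos _) hZ
  have hqsum : ∑ j, q j = 1 := by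
    rw [hqdef, ← Finset.sum_div, ← hZdef, div_self hZ.ne']
  set Dq : Matrix (Fin d) (Fin d) ℂ := Matrix.diagonal (fun j => (q j : ℂ)) with hDq
  have hgibbs : gibbs X lam = V * Dq * star V := by
    rw [gibbs, ← hHdef, htraceE, hexp, hDq]
    have e1 : (fun j => (q j : ℂ)) = fun j => (Z : ℂ)⁻¹ * (Real.exp (ν j) : ℂ) := by
      funext j
      rw [hqdef]
      push_cast
      rw [div_eq_inv_mul]
    rw [e1]
    rw [show Matrix.diagonal (fun j => (Z:ℂ)⁻¹ * (Real.exp (ν j) : ℂ))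
        = (Z:ℂ)⁻¹ • Matrix.diagonal (fun j => (Real.exp (ν j) : ℂ)) by
      rw [← Matrix.diagonal_smul]; rfl]
    simp only [Matrix.mul_smul, Matrix.smul_mul]
  -- W and its unitarity
  set W : Matrix (Fin d) (Fin d) ℂ := star V * U with hWdef
  have hstarW : star W = star U * V := by rw [hWdef, star_mul, star_star]
  have hWW : W * star W = 1 := by
    rw [hWdef, hstarW, mul_assoc, ← mul_assoc U (star U) V, hUU, one_mul, hVV']
  have hWW' : star W * W = 1 := by
    rw [hWdef, hstarW, mul_assoc, ← mul_assoc V (star V) U, hVV, one_mul, hUU']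
  set a : Fin d → Fin d → ℝ := fun j i => Complex.normSq (W j i) with hadef
  have ha0 : ∀ j i, 0 ≤ a j i := fun j i => Complex.normSq_nonneg _
  have hrow : ∀ j, ∑ i, a j i = 1 := by
    intro j
    have h1 : (W * star W) j j = 1 := by rw [hWW]; simp
    rw [Matrix.mul_apply] at h1
    have h2 : ∑ i, (a j i : ℂ) = 1 := by
      rw [← h1]
      refine Finset.sum_congr rfl fun i _ => ?_
      rw [Matrix.star_apply, hadef]
      exact (Complex.mul_conj (W j i)).symm
    exact_mod_cast h2
  have hcol : ∀ i, ∑ j, a j i = 1 := by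
    intro i
    have h1 : (star W * W) i i = 1 := by rw [hWW']; simp
    rw [Matrix.mul_apply] at h1
    have h2 : ∑ j, (a j i : ℂ) = 1 := by
      rw [← h1]
      refine Finset.sum_congr rfl fun j _ => ?_
      rw [Matrix.star_apply, hadef]
      exact Complex.normSq_eq_conj_mul_self
    exact_mod_cast h2
  -- eigenvalues of ρ
  have hp0 : ∀ i, 0 ≤ p i := fun i => hpsd.eigenvalues_nonneg i
  have hpsum : ∑ i, p i = 1 := by
    have h1 : ρ.trace = ((∑ i, p i : ℝ) : ℂ) := by
      rw [hρspec, Matrix.trace_mul_cycle, hUU', one_mul, hDp, Matrix.trace_diagonal]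
      push_cast
      rfl
    rw [htr] at h1
    exact_mod_cast h1.symm
  -- energy identity
  have hA : (ρ * H).trace = ∑ i, (lam i : ℂ) * (ρ * X i).trace := by
    rw [hHdef, Finset.mul_sum, Matrix.trace_sum]
    refine Finset.sum_congr rfl fun i _ => ?_
    rw [Matrix.mul_smul, Matrix.trace_smul, smul_eq_mul]
  have hmat : star U * (-H) * U = star W * Dν * W := by
    rw [hNspec, hstarW, hWdef]
    simp only [mul_assoc]
  have hMii : ∀ i, (star W * Dν * W) i i = ∑ j, (ν j : ℂ) * (a j i : ℂ) := by
    intro i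
    rw [Matrix.mul_apply]
    refine Finset.sum_congr rfl fun j _ => ?_
    rw [hDν, Matrix.mul_diagonal, Matrix.star_apply, hadef]
    rw [show ((Complex.normSq (W j i) : ℝ) : ℂ) = (starRingEnd ℂ) (W j i) * W j i from
      Complex.normSq_eq_conj_mul_self]
    simp only [Complex.star_def]
    ring
  have htr2 : (ρ * (-H)).trace = (Dp * (star W * Dν * W)).trace := by
    rw [hρspec, ← hmat]
    simp only [mul_assoc]
    rw [Matrix.trace_mul_comm]
    simp only [mul_assoc]
  have hB : (ρ * (-H)).trace = ((∑ j, ∑ i, a j i * (ν j * p i) : ℝ) : ℂ) := by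
    rw [htr2]
    have h1 : (Dp * (star W * Dν * W)).trace = ∑ i, (p i : ℂ) * ((star W * Dν * W) i i) := by
      rw [Matrix.trace]
      refine Finset.sum_congr rfl fun i _ => ?_
      rw [Matrix.diag_apply, hDp, Matrix.diagonal_mul]
    rw [h1]
    rw [Finset.sum_comm (γ := Fin d)]
    push_cast
    refine Finset.sum_congr rfl fun i _ => ?_
    rw [hMii i, Finset.mul_sum]
    push_cast
    refine Finset.sum_congr rfl fun j _ => ?_
    ring
  have hEnergy : ∑ i, lam i * ((ρ * X i).trace).re = -∑ j, ∑ i, a j i * (ν j * p i) := by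
    have h1 : ((ρ * H).trace).re = ∑ i, lam i * ((ρ * X i).trace).re := by
      rw [hA, Complex.re_sum]
      refine Finset.sum_congr rfl fun i _ => ?_
      rw [Complex.re_ofReal_mul]
    have h3 : (ρ * (-H)).trace = -(ρ * H).trace := by rw [Matrix.mul_neg, Matrix.trace_neg]
    have h2 : -((ρ * H).trace).re = ∑ j, ∑ i, a j i * (ν j * p i) := by
      rw [← Complex.neg_re, ← h3, hB, Complex.ofReal_re]
    rw [← h1]
    linarith
  have hent : entropy ρ = -∑ i, p i * Real.log (p i) := by
    rw [entropy, dif_pos hρH]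
  -- sums needed for klein
  have hap : ∑ j, ∑ i, a j i * p i = 1 := by
    rw [Finset.sum_comm]
    have : ∀ i, ∑ j, a j i * p i = p i := by
      intro i
      rw [← Finset.sum_mul, hcol, one_mul]
    rw [Finset.sum_congr rfl fun i _ => this i, hpsum]
  have haq : ∑ j, ∑ i, a j i * q j = 1 := by
    have : ∀ j, ∑ i, a j i * q j = q j := by
      intro j
      rw [← Finset.sum_mul, hrow, one_mul]
    rw [Finset.sum_congr rfl fun j _ => this j, hqsum]
  have hlogq : ∀ j, Real.log (q j) = ν j - Real.log Z := by
    intro j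
    rw [hqdef]
    rw [Real.log_div (Real.exp_ne_zero _) hZ.ne', Real.log_exp]
  -- main identity
  have hT : logPartition X lam + (∑ i, lam i * ((ρ * X i).trace).re) - entropy ρ
      = ∑ j, ∑ i, a j i * (p i * Real.log (p i) - p i * Real.log (q j)) := by
    rw [hφ, hEnergy, hent]
    have e1 : ∀ j i, a j i * (p i * Real.log (p i) - p i * Real.log (q j))
        = a j i * (p i * Real.log (p i)) - a j i * (ν j * p i)
          + Real.log Z * (a j i * p i) := by
      intro j i; rw [hlogq j]; ring
    simp_rw [e1, Finset.sum_add_distrib, Finset.sum_sub_distrib, ← Finset.mul_sum, hap]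
    have s1 : ∑ j, ∑ i, a j i * (p i * Real.log (p i)) = ∑ i, p i * Real.log (p i) := by
      rw [Finset.sum_comm]
      refine Finset.sum_congr rfl fun i _ => ?_
      rw [← Finset.sum_mul, hcol, one_mul]
    rw [s1]
    ring
  obtain ⟨hTnn, hTzero⟩ := sum_klein a p q ha0 hp0 hq0 hap haq
  have hineq : entropy ρ ≤ logPartition X lam + ∑ i, lam i * ((ρ * X i).trace).re := by
    linarith
  refine ⟨hineq, ?_, ?_⟩
  · -- equality → ρ = gibbs
    intro he
    have hT0 : ∑ j, ∑ i, a j i * (p i * Real.log (p i) - p i * Real.log (q j)) = 0 := by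
      linarith
    have hC := hTzero.mp hT0
    have hWpq : ∀ j i, W j i * (p i : ℂ) = (q j : ℂ) * W j i := by
      intro j i
      rcases hC j i with h0 | h0
      · have hw : W j i = 0 := by
          have := Complex.normSq_eq_zero.mp h0
          exact this
        rw [hw, zero_mul, mul_zero]
      · rw [h0]; ring
    have hmat2 : W * Dp = Dq * W := by
      ext j i
      rw [hDp, hDq, Matrix.mul_diagonal, Matrix.diagonal_mul]
      exact hWpq j i
    have hUVW : U = V * W := by
      rw [hWdef, ← mul_assoc, hVV, one_mul]
    rw [hgibbs, hρspec, hUVW, star_mul]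
    calc V * W * Dp * (star W * star V)
        = V * (W * Dp) * (star W * star V) := by rw [mul_assoc V W Dp]
      _ = V * (Dq * W) * (star W * star V) := by rw [hmat2]
      _ = V * Dq * (W * star W * star V) := by simp only [mul_assoc]
      _ = V * Dq * star V := by rw [hWW, one_mul]
  · -- ρ = gibbs → equality
    intro he
    have hC : ∀ j i, a j i = 0 ∨ p i = q j := by
      have hρU : ρ * U = U * Dp := by
        rw [hρspec, mul_assoc, mul_assoc, hUU', mul_one]
      have hmat3 : Dq * W = W * Dp := by
        have h4 : star V * ρ = Dq * star V := by
          rw [he, hgibbs, ← mul_assoc, ← mul_assoc, hVV', one_mul]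
        calc Dq * W = Dq * star V * U := by rw [hWdef, mul_assoc]
          _ = star V * ρ * U := by rw [h4]
          _ = star V * (ρ * U) := by rw [mul_assoc]
          _ = star V * (U * Dp) := by rw [hρU]
          _ = W * Dp := by rw [hWdef, mul_assoc]
      intro j i
      have hji : (q j : ℂ) * W j i = W j i * (p i : ℂ) := by
        have h5 : (Dq * W) j i = (W * Dp) j i := by rw [hmat3]
        rw [hDq, hDp, Matrix.diagonal_mul, Matrix.mul_diagonal] at h5
        exact h5
      by_cases hw : W j i = 0
      · left
        rw [hadef]
        simp [hw]
      · right
        have h6 : (q j : ℂ) * W j i = (p i : ℂ) * W j i := by rw [hji]; ring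
        have h7 : (q j : ℂ) = (p i : ℂ) := mul_right_cancel₀ hw h6
        exact_mod_cast h7.symm
    have hT0 := hTzero.mpr hC
    linarith


end MaxEnt
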